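/- arXiv:math/9911063 — 3 statements merged into one kernel-verified Lean document; each statement's English description precedes it below -/
import Mathlib

section
/- Let G be a group, ι : K → G an injective group homomorphism whose image is a normal subgroup of G, and ρ : G → H a surjective group homomorphism with ker ρ = im ι. Let S_H and S_K be sets, π_H : FreeGroup S_H → H and π_K : FreeGroup S_K → K surjective homomorphisms, and R_H ⊆ FreeGroup S_H, R_K ⊆ FreeGroup S_K subsets such that ker π_H is the normal closure of R_H and ker π_K is the normal closure of R_K. Let σ : S_H → G satisfy ρ(σ(x)) = π_H(of x) for every x ∈ S_H, and let φ : FreeGroup S_H → G be the homomorphism extending σ. Suppose given, for each r ∈ R_H, an element w_r ∈ FreeGroup S_K with φ(r) = ι(π_K(w_r)), and, for each x ∈ S_H and y ∈ S_K, an element v(x,y) ∈ FreeGroup S_K with σ(x)·ι(π_K(of y))·σ(x)⁻¹ = ι(π_K(v(x,y))). Let ψ : FreeGroup (S_H ⊕ S_K) → G be the homomorphism with ψ(of (inl x)) = σ(x) and ψ(of (inr y)) = ι(π_K(of y)), and let j_H : FreeGroup S_H → FreeGroup (S_H ⊕ S_K) and j_K : FreeGroup S_K → FreeGroup (S_H ⊕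 S_K) be the canonical embeddings. Then ψ is surjective and ker ψ is the normal closure of R_1 ∪ R_2 ∪ j_K(R_K), where R_1 = { j_H(r)·j_K(w_r)⁻¹ : r ∈ R_H } and R_2 = { of(inl x)·of(inr y)·of(inl x)⁻¹·j_K(v(x,y))⁻¹ : x ∈ S_H, y ∈ S_K }. -/
/-! Put `F = FreeGroup (S_H ⊕ S_K)`, `N` the normal closure of the relators and `Q = F ⧸ N`;
`ψ` descends to `f : Q →* G`, and `π_K` lifts to `κ : K →* Q` with `f ∘ κ = ι`. The relators
`R_2` make conjugation by a generator from `S_H` act on `κ(K)` as the automorphism of `K` that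
conjugation by `σ x` induces in `G`, so `κ(K)` is normal in `Q`; with the generators from `S_H` it
generates `Q`. The relators `R_1` put the image of `ker π_H` into `κ(K)`, so applying `ρ` shows
`ker f ≤ κ(K)`, and `f ∘ κ = ι` injective gives `ker f = 1`, i.e. `ker ψ = N`. Surjectivity of
`ψ` holds because `ψ` hits `ι(K) = ker ρ` and `ρ ∘ ψ` is onto `H`. -/

namespace MonoidHom

variable {A G H K Q : Type*} [Group A] [Group G] [Group H] [Group K] [Group Q]

theorem surjective_of_surjective_comp_of_ker_le_range (ψ : A →* G) (ρ : G →* H)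
    (hρψ : Function.Surjective (ρ.comp ψ)) (hker : ρ.ker ≤ ψ.range) :
    Function.Surjective ψ := by
  intro g
  obtain ⟨a, ha⟩ := hρψ (ρ g)
  obtain ⟨b, hb⟩ := hker (show g * (ψ a)⁻¹ ∈ ρ.ker by
    rw [mem_ker, map_mul, map_inv, ← comp_apply, ha, mul_inv_cancel])
  exact ⟨b * a, by rw [map_mul, hb, inv_mul_cancel_right]⟩

theorem injective_of_ker_le_range (f : Q →* G) (κ : K →* Q)
    (hfκ : Function.Injective (f.comp κ)) (hker : f.ker ≤ κ.range) : Function.Injective f := by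
  refine (injective_iff_map_eq_one f).2 fun x hx => ?_
  obtain ⟨k, rfl⟩ := hker hx
  rw [hfκ (show f.comp κ k = f.comp κ 1 by simpa using hx), map_one]

theorem ker_le_of_sup_eq_top (f : Q →* H) (α : A →* Q) {M : Subgroup Q} [M.Normal]
    (hsup : α.range ⊔ M = ⊤) (hM : M ≤ f.ker) (hα : (f.comp α).ker ≤ M.comap α) :
    f.ker ≤ M := by
  intro x hx
  have hx' : x ∈ ((α.range ⊔ M : Subgroup Q) : Set Q) := by simp [hsup]
  rw [Subgroup.mul_normal] at hx'
  obtain ⟨_, ⟨a, rfl⟩, m, hm, rfl⟩ := hx'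
  have hfm : f m = 1 := hM hm
  have ha : α a ∈ M := hα <| by simpa [hfm] using hx
  exact M.mul_mem ha hm

theorem mem_normalizer_range_of_conj_eq (κ : K →* Q) (γ : K ≃* K) {c : Q}
    (h : ∀ k, c * κ k * c⁻¹ = κ (γ k)) : c ∈ Subgroup.normalizer κ.range := by
  refine Subgroup.mem_normalizer_iff.2 fun x => ⟨?_, ?_⟩
  · rintro ⟨k, rfl⟩
    exact ⟨γ k, (h k).symm⟩
  · rintro ⟨k, hk⟩
    refine ⟨γ.symm k, mul_left_cancel (a := c) (mul_right_cancel (b := c⁻¹) ?_)⟩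
    rw [h, MulEquiv.apply_symm_apply, hk]

theorem exists_mulEquiv_conj (ι : K →* G) (hι : Function.Injective ι) [ι.range.Normal] (g : G) :
    ∃ γ : K ≃* K, ∀ k, ι (γ k) = g * ι k * g⁻¹ :=
  ⟨((ofInjective hι).trans (MulAut.conjNormal g)).trans (ofInjective hι).symm, fun k => by
    simp [MulAut.conjNormal_apply, ofInjective_apply]⟩

theorem mem_normalizer_range_of_conj_generators {S : Type*} {ι : K →* G}
    (hι : Function.Injective ι) [ι.range.Normal] {π : FreeGroup S →* K}
    (hπ : Function.Surjective π) (κ : K →* Q) {g : G} {c : Q} {v : S → FreeGroup S}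
    (hvG : ∀ y, g * ι (π (.of y)) * g⁻¹ = ι (π (v y)))
    (hvQ : ∀ y, c * κ (π (.of y)) * c⁻¹ = κ (π (v y))) :
    c ∈ Subgroup.normalizer κ.range := by
  -- `γ` is conjugation by `g` transported to `K`; being an automorphism, it makes conjugation by
  -- `c` map `κ.range` onto itself, not just into it.
  obtain ⟨γ, hγ⟩ := exists_mulEquiv_conj ι hι g
  refine mem_normalizer_range_of_conj_eq κ γ fun k => ?_
  obtain ⟨s, rfl⟩ := hπ k
  have hconj : (MulAut.conj c).toMonoidHom.comp (κ.comp π) = (κ.comp γ.toMonoidHom).comp π :=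
    FreeGroup.ext_hom _ _ fun y => by
      simp only [comp_apply, MulEquiv.coe_toMonoidHom, MulAut.conj_apply]
      rw [hvQ, show γ (π (.of y)) = π (v y) from hι (by rw [hγ, hvG])]
  exact DFunLike.congr_fun hconj s

end MonoidHom

theorem FreeGroup.eq_top_of_forall_of_mem {α Q : Type*} [Group Q] (q : FreeGroup α →* Q)
    (hq : Function.Surjective q) {M : Subgroup Q} (h : ∀ a, q (of a) ∈ M) : M = ⊤ := by
  have : Subgroup.closure (Set.range of) ≤ M.comap q :=
    (Subgroup.closure_le _).2 (Set.range_subset_iff.2 h)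
  rw [closure_range_of] at this
  refine eq_top_iff.2 fun x _ => ?_
  obtain ⟨u, rfl⟩ := hq x
  exact this (Subgroup.mem_top u)

open FreeGroup (of map)
open Subgroup

namespace ExtensionPresentation

variable {G H K Q S_H S_K : Type*} [Group G] [Group H] [Group K] [Group Q]
  {ι : K →* G} {ρ : G →* H} {π_H : FreeGroup S_H →* H} {π_K : FreeGroup S_K →* K}
  {R_H : Set (FreeGroup S_H)} {R_K : Set (FreeGroup S_K)}
  {w : R_H → FreeGroup S_K} {v : S_H → S_K → FreeGroup S_K}

theorem injective_of_relations (hι_inj : Function.Injective ι) [ι.range.Normal]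
    (hιρ : ι.range ≤ ρ.ker) (hRH : π_H.ker = normalClosure R_H) (hπK : Function.Surjective π_K)
    {q : FreeGroup (S_H ⊕ S_K) →* Q} (hq : Function.Surjective q) (f : Q →* G) (κ : K →* Q)
    (hfκ : f.comp κ = ι) (hρf : (ρ.comp f).comp (q.comp (map Sum.inl)) = π_H)
    (hv : ∀ x y, f (q (of (Sum.inl x))) * ι (π_K (of y)) * (f (q (of (Sum.inl x))))⁻¹ =
      ι (π_K (v x y)))
    (hκ_gen : ∀ y, q (of (Sum.inr y)) = κ (π_K (of y)))
    (hκ_H : ∀ r : R_H, q (map Sum.inl r.1) = κ (π_K (w r)))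
    (hκ_conj : ∀ x y, q (of (Sum.inl x)) * κ (π_K (of y)) * (q (of (Sum.inl x)))⁻¹ =
      κ (π_K (v x y))) :
    Function.Injective f := by
  have hnormal : κ.range.Normal := by
    rw [← normalizer_eq_top_iff]
    refine FreeGroup.eq_top_of_forall_of_mem q hq ?_
    rintro (x | y)
    · exact MonoidHom.mem_normalizer_range_of_conj_generators hι_inj hπK κ (hv x) (hκ_conj x)
    · exact le_normalizer ⟨π_K (of y), (hκ_gen y).symm⟩
  have hsup : (q.comp (map Sum.inl)).range ⊔ κ.range = ⊤ := by
    refine FreeGroup.eq_top_of_forall_of_mem q hq ?_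
    rintro (x | y)
    · exact mem_sup_left ⟨of x, by simp⟩
    · exact mem_sup_right ⟨π_K (of y), (hκ_gen y).symm⟩
  have hH : π_H.ker ≤ κ.range.comap (q.comp (map Sum.inl)) := by
    rw [hRH]
    exact normalClosure_le_normal fun r hr => ⟨π_K (w ⟨r, hr⟩), (hκ_H ⟨r, hr⟩).symm⟩
  have hκρ : κ.range ≤ (ρ.comp f).ker := by
    rintro _ ⟨k, rfl⟩
    exact hιρ ⟨k, (DFunLike.congr_fun hfκ k).symm⟩
  refine MonoidHom.injective_of_ker_le_range f κ (hfκ ▸ hι_inj) ?_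
  calc f.ker ≤ (ρ.comp f).ker := by rw [← MonoidHom.comap_ker]; exact f.ker_le_comap _
    _ ≤ κ.range := MonoidHom.ker_le_of_sup_eq_top _ _ hsup hκρ (hρf ▸ hH)

theorem ker_eq_of_relations (hι_inj : Function.Injective ι) [ι.range.Normal]
    (hιρ : ι.range ≤ ρ.ker) (hRH : π_H.ker = normalClosure R_H) (hπK : Function.Surjective π_K)
    (hRK : π_K.ker = normalClosure R_K) {ψ : FreeGroup (S_H ⊕ S_K) →* G}
    (hψK : ∀ s, ψ (map Sum.inr s) = ι (π_K s)) (hρψ : (ρ.comp ψ).comp (map Sum.inl) = π_H)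
    (hv : ∀ x y, ψ (of (Sum.inl x)) * ι (π_K (of y)) * (ψ (of (Sum.inl x)))⁻¹ = ι (π_K (v x y)))
    (N : Subgroup (FreeGroup (S_H ⊕ S_K))) [N.Normal] (hNψ : N ≤ ψ.ker)
    (hN_H : ∀ r : R_H, map Sum.inl r.1 * (map Sum.inr (w r))⁻¹ ∈ N)
    (hN_conj : ∀ x y, of (Sum.inl x) * of (Sum.inr y) * (of (Sum.inl x))⁻¹ *
      (map Sum.inr (v x y))⁻¹ ∈ N)
    (hN_K : ∀ s ∈ R_K, map Sum.inr s ∈ N) :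
    ψ.ker = N := by
  set q := QuotientGroup.mk' N
  set f := QuotientGroup.lift N ψ hNψ
  have hq_eq : ∀ {a b}, a * b⁻¹ ∈ N → q a = q b := fun h =>
    QuotientGroup.eq_iff_div_mem.2 (by rwa [div_eq_mul_inv])
  have hK : π_K.ker ≤ (q.comp (map Sum.inr)).ker := by
    rw [hRK]
    exact normalClosure_le_normal fun s hs => by simpa [q] using hN_K s hs
  set κ := π_K.liftOfSurjective hπK ⟨q.comp (map Sum.inr), hK⟩
  have hκ : ∀ s, κ (π_K s) = q (map Sum.inr s) :=
    MonoidHom.liftOfRightInverse_comp_apply _ _ _ _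
  have hfκ : f.comp κ = ι := (MonoidHom.cancel_right hπK).1 <| by
    ext y; simpa [hκ, f, q] using hψK (of y)
  have hf : Function.Injective f := by
    refine injective_of_relations hι_inj hιρ hRH hπK (QuotientGroup.mk'_surjective N) f κ hfκ
      hρψ hv (fun y => by rw [hκ, map.of]) (fun r => by rw [hκ]; exact hq_eq (hN_H r))
      (fun x y => ?_)
    simpa [hκ, q] using hq_eq (hN_conj x y)
  refine le_antisymm (fun u hu => ?_) hNψ
  rw [← QuotientGroup.eq_one_iff]
  exact hf (by simpa [f] using hu)

end ExtensionPresentation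

theorem presentation_of_extension_general
    {G H K : Type*} [Group G] [Group H] [Group K]
    {S_H S_K : Type*}
    (ι : K →* G) (hι_inj : Function.Injective ι) (hι_norm : ι.range.Normal)
    (ρ : G →* H) (hker : ρ.ker = ι.range)
    (π_H : FreeGroup S_H →* H) (hπH : Function.Surjective π_H)
    (π_K : FreeGroup S_K →* K) (hπK : Function.Surjective π_K)
    (R_H : Set (FreeGroup S_H)) (hRH : π_H.ker = Subgroup.normalClosure R_H)
    (R_K : Set (FreeGroup S_K)) (hRK : π_K.ker = Subgroup.normalClosure R_K)
    (σ : S_H → G) (hσ : ∀ x : S_H, ρ (σ x) = π_H (FreeGroup.of x))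
    (φ : FreeGroup S_H →* G) (hφ : ∀ x : S_H, φ (FreeGroup.of x) = σ x)
    (w : R_H → FreeGroup S_K) (hw : ∀ r : R_H, φ r.1 = ι (π_K (w r)))
    (v : S_H → S_K → FreeGroup S_K)
    (hv : ∀ (x : S_H) (y : S_K),
      σ x * ι (π_K (FreeGroup.of y)) * (σ x)⁻¹ = ι (π_K (v x y)))
    (ψ : FreeGroup (S_H ⊕ S_K) →* G)
    (hψ1 : ∀ x : S_H, ψ (FreeGroup.of (Sum.inl x)) = σ x)
    (hψ2 : ∀ y : S_K, ψ (FreeGroup.of (Sum.inr y)) = ι (π_K (FreeGroup.of y))) :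
    Function.Surjective ψ ∧
      ψ.ker = Subgroup.normalClosure
        ((Set.range fun r : R_H =>
            FreeGroup.map Sum.inl r.1 * (FreeGroup.map Sum.inr (w r))⁻¹) ∪
          {u | ∃ (x : S_H) (y : S_K),
            u = FreeGroup.of (Sum.inl x) * FreeGroup.of (Sum.inr y) *
                (FreeGroup.of (Sum.inl x))⁻¹ * (FreeGroup.map Sum.inr (v x y))⁻¹} ∪
          (FreeGroup.map Sum.inr '' R_K)) := by
  have := hι_norm
  have hψH : ∀ u, ψ (map Sum.inl u) = φ u :=
    DFunLike.congr_fun (FreeGroup.ext_hom (ψ.comp (map Sum.inl)) φ fun x => by simp [hψ1, hφ])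
  have hψK : ∀ s, ψ (map Sum.inr s) = ι (π_K s) := DFunLike.congr_fun
    (FreeGroup.ext_hom (ψ.comp (map Sum.inr)) (ι.comp π_K) fun y => by simp [hψ2])
  have hρψ : (ρ.comp ψ).comp (map Sum.inl) = π_H :=
    FreeGroup.ext_hom _ _ fun x => by simp [hψ1, hσ]
  have hsurj : Function.Surjective ψ := by
    refine MonoidHom.surjective_of_surjective_comp_of_ker_le_range ψ ρ
      (Function.Surjective.of_comp (g := map Sum.inl) (by rwa [← MonoidHom.coe_comp, hρψ])) ?_
    rw [hker]
    rintro _ ⟨k, rfl⟩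
    obtain ⟨s, rfl⟩ := hπK k
    exact ⟨map Sum.inr s, hψK s⟩
  refine ⟨hsurj, ExtensionPresentation.ker_eq_of_relations hι_inj hker.ge hRH hπK hRK hψK hρψ
    (fun x y => hψ1 x ▸ hv x y) _ (normalClosure_le_normal ?_)
    (fun r => subset_normalClosure (.inl (.inl ⟨r, rfl⟩)))
    (fun x y => subset_normalClosure (.inl (.inr ⟨x, y, rfl⟩)))
    (fun s hs => subset_normalClosure (.inr ⟨s, hs, rfl⟩))⟩
  rintro _ ((⟨r, rfl⟩ | ⟨x, y, rfl⟩) | ⟨s, hs, rfl⟩)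
  · simp [hψH, hψK, hw]
  · simp [hψ1, hψ2, hψK, hv]
  · simp [hψK, show π_K s = 1 from hRK.ge (subset_normalClosure hs)]

/-- **Lemma 2.5** of Labruère–Paris, "Presentations for the punctured mapping class
groups in terms of Artin groups": a presentation for the middle group of a short
exact sequence `1 → K → G → H → 1` from presentations of `K` and `H`. -/
theorem presentation_of_extension
    {G H K : Type*} [Group G] [Group H] [Group K]
    {S_H S_K : Type*}
    (ι : K →* G) (hι_inj : Function.Injective ι) (hι_norm : ι.range.Normal)
    (ρ : G →* H) (hρ_surj : Function.Surjective ρ) (hker : ρ.ker = ι.range)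
    (π_H : FreeGroup S_H →* H) (hπH : Function.Surjective π_H)
    (π_K : FreeGroup S_K →* K) (hπK : Function.Surjective π_K)
    (R_H : Set (FreeGroup S_H)) (hRH : π_H.ker = Subgroup.normalClosure R_H)
    (R_K : Set (FreeGroup S_K)) (hRK : π_K.ker = Subgroup.normalClosure R_K)
    (σ : S_H → G) (hσ : ∀ x : S_H, ρ (σ x) = π_H (FreeGroup.of x))
    (φ : FreeGroup S_H →* G) (hφ : ∀ x : S_H, φ (FreeGroup.of x) = σ x)
    (w : R_H → FreeGroup S_K) (hw : ∀ r : R_H, φ r.1 = ι (π_K (w r)))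
    (v : S_H → S_K → FreeGroup S_K)
    (hv : ∀ (x : S_H) (y : S_K),
      σ x * ι (π_K (FreeGroup.of y)) * (σ x)⁻¹ = ι (π_K (v x y)))
    (ψ : FreeGroup (S_H ⊕ S_K) →* G)
    (hψ1 : ∀ x : S_H, ψ (FreeGroup.of (Sum.inl x)) = σ x)
    (hψ2 : ∀ y : S_K, ψ (FreeGroup.of (Sum.inr y)) = ι (π_K (FreeGroup.of y))) :
    Function.Surjective ψ ∧
      ψ.ker = Subgroup.normalClosure
        ((Set.range fun r : R_H =>
            FreeGroup.map Sum.inl r.1 * (FreeGroup.map Sum.inr (w r))⁻¹) ∪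
          {u | ∃ (x : S_H) (y : S_K),
            u = FreeGroup.of (Sum.inl x) * FreeGroup.of (Sum.inr y) *
                (FreeGroup.of (Sum.inl x))⁻¹ * (FreeGroup.map Sum.inr (v x y))⁻¹} ∪
          (FreeGroup.map Sum.inr '' R_K)) :=
  presentation_of_extension_general ι hι_inj hι_norm ρ hker π_H hπH π_K hπK R_H hRH R_K hRK σ hσ φ
    hφ w hw v hv ψ hψ1 hψ2
end

section
/- Let l ≥ 4 and let A(D_l) be the Artin group of the Coxeter graph D_l. Then in A(D_l): Δ(x_2,…,x_{l−1})⁻¹ x_1⁻¹ x_2 Δ(x_2,…,x_{l−1}) · Δ(x_2,…,x_l)⁻¹ x_2⁻¹ x_1 Δ(x_2,…,x_l) = x_l · Δ(x_2,…,x_{l−1})⁻¹ x_1⁻¹ x_2 Δ(x_2,…,x_{l−1}) · x_l⁻¹. -/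
/-!
Write `g = x₁⁻¹ x₂`, and let `b_m = x₂ x₃ ⋯ x_m` and `a_m = x₁ x₃ ⋯ x_m` be the products along
the two branches of `D_l`. Each branch is a chain of type `A`, so conjugation by its full product
shifts every generator but the last one step along the chain; hence
`b_l b_{l-1} b_l⁻¹ = x₃ ⋯ x_l = a_l a_{l-1} a_l⁻¹`. As `x₁` and `x₂` commute, `g = b_m a_m⁻¹` for
every `m`, and these identities give `g b_l⁻¹ g⁻¹ b_l = E g E⁻¹` with `E = b_l b_{l-1}⁻¹`.
Finally `Δ(x₂,…,x_l) = b_l Δ(x₂,…,x_{l-1})`, and `Δ(x₂,…,x_{l-1})` conjugates `x_l` to `E`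
because `Δ(x₂,…,x_{l-2})` commutes with `x_l`; substituting both turns the identity into the claim.
-/

namespace ArtinTypeD

/-- `altWord a b m` is the alternating word `prod(a,b,m) = abab⋯` of length `m`. -/
def altWord {α : Type*} (a b : α) : ℕ → FreeGroup α
  | 0 => 1
  | k + 1 => FreeGroup.of a * altWord b a k

/-- The Coxeter matrix of the graph `D_l`; the `0`-based vertex `i : Fin l`
corresponds to the vertex `x_{i+1}` of `D_l`, so the edges (label `3`) are
`{x_1,x_3}`, `{x_2,x_3}` and `{x_i,x_{i+1}}` for `3 ≤ i ≤ l-1`; every other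
pair of distinct vertices has label `2`. -/
def coxD (l : ℕ) (i j : Fin l) : ℕ :=
  if i = j then 1
  else if ((i : ℕ) = 0 ∧ (j : ℕ) = 2) ∨ ((j : ℕ) = 0 ∧ (i : ℕ) = 2) ∨
      (1 ≤ (i : ℕ) ∧ (i : ℕ) + 1 = (j : ℕ)) ∨ (1 ≤ (j : ℕ) ∧ (j : ℕ) + 1 = (i : ℕ)) then 3
  else 2

/-- The Artin relators of `D_l`. -/
def relsD (l : ℕ) : Set (FreeGroup (Fin l)) :=
  {w | ∃ i j : Fin l, i ≠ j ∧ w = altWord i j (coxD l i j) * (altWord j i (coxD l i j))⁻¹}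

/-- The Artin group `A(D_l)`. -/
abbrev AD (l : ℕ) := PresentedGroup (relsD l)

/-- The generator `x_i` of `A(D_l)` (`1`-indexed, junk value `1` out of range). -/
def x (l i : ℕ) : AD l :=
  if h : 1 ≤ i ∧ i ≤ l then PresentedGroup.of (⟨i - 1, by omega⟩ : Fin l) else 1

/-- `Δ(z_1,…,z_m) = (z_1⋯z_m)(z_1⋯z_{m-1})⋯(z_1z_2)z_1`. -/
def deltaList {G : Type*} [Group G] (zs : List G) : G :=
  (((List.range zs.length).reverse).map fun k => (zs.take (k + 1)).prod).prod

/-- `Δ(x_a, x_{a+1}, …, x_b)` in `A(D_l)`. -/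
def delta (l a b : ℕ) : AD l :=
  deltaList ((List.range (b + 1 - a)).map fun k => x l (a + k))

section BraidChain

variable {G : Type*} [Group G]

theorem commutator_eq_conj_of_common_shift {u v c c' : G} (huv : Commute u v)
    (hu : u * c * (u * c') = c * (u * c)) (hv : v * c * (v * c') = c * (v * c)) :
    v⁻¹ * u * (u * c)⁻¹ * (v⁻¹ * u)⁻¹ * (u * c) =
      u * c * (u * c')⁻¹ * (v⁻¹ * u) * (u * c * (u * c')⁻¹)⁻¹ := by
  have hg : ∀ d, v⁻¹ * u = u * d * (v * d)⁻¹ := fun d => by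
    rw [mul_inv_rev, mul_assoc, mul_inv_cancel_left, huv.inv_right.eq]
  have hc : (u * c)⁻¹ * (v * c) = c⁻¹ * (v * c * (u * c)⁻¹) * c := by
    simp only [mul_inv_rev, mul_assoc, mul_inv_cancel_left, ← huv.inv_left.eq]
  have hu' : u * c' = (u * c)⁻¹ * c * (u * c) := by rw [mul_assoc, ← hu]; group
  have hv' : v * c' = (v * c)⁻¹ * c * (v * c) := by rw [mul_assoc, ← hv]; group
  calc v⁻¹ * u * (u * c)⁻¹ * (v⁻¹ * u)⁻¹ * (u * c)
      = u * c * (v * c)⁻¹ * ((u * c)⁻¹ * (v * c)) := by rw [hg c]; group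
    _ = u * c * (v * c')⁻¹ * (u * c') * (u * c)⁻¹ := by rw [hc, hu', hv']; group
    _ = u * c * (u * c')⁻¹ * (v⁻¹ * u) * (u * c * (u * c')⁻¹)⁻¹ := by rw [hg c']; group

def chainProd (y : ℕ → G) (k : ℕ) : G := ((List.range k).map y).prod

theorem chainProd_zero (y : ℕ → G) : chainProd y 0 = 1 := rfl

theorem chainProd_succ (y : ℕ → G) (k : ℕ) : chainProd y (k + 1) = chainProd y k * y k := by
  simp [chainProd, List.range_succ]

theorem chainProd_succ' (y : ℕ → G) (k : ℕ) :
    chainProd y (k + 1) = y 0 * chainProd (fun i => y (i + 1)) k := by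
  simp [chainProd, List.range_succ_eq_map, Function.comp_def]

/-- `y 0, …, y n` satisfy the Artin relations of the Coxeter graph `A_{n+1}`. -/
structure IsBraidChain (y : ℕ → G) (n : ℕ) : Prop where
  braid : ∀ i < n, y i * y (i + 1) * y i = y (i + 1) * y i * y (i + 1)
  commute : ∀ i j, i + 2 ≤ j → j ≤ n → Commute (y i) (y j)

namespace IsBraidChain

variable {y z : ℕ → G} {n : ℕ}

theorem commute_chainProd (hy : IsBraidChain y n) {k m : ℕ} (hkm : k + 1 ≤ m) (hm : m ≤ n) :
    Commute (chainProd y k) (y m) :=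
  Commute.list_prod_left _ _ fun w hw => by
    obtain ⟨i, hi, rfl⟩ := List.mem_map.1 hw
    exact hy.commute i m (by rw [List.mem_range] at hi; omega) hm

theorem chainProd_mul_eq_mul_chainProd (hy : IsBraidChain y n) {j k : ℕ} (hjk : j + 2 ≤ k)
    (hk : k ≤ n + 1) : chainProd y k * y j = y (j + 1) * chainProd y k := by
  induction k, hjk using Nat.le_induction with
  | base =>
    have hcomm := (hy.commute_chainProd le_rfl (by omega : j + 1 ≤ n)).eq
    calc chainProd y (j + 2) * y j
        = chainProd y j * (y j * y (j + 1) * y j) := by simp only [chainProd_succ, mul_assoc]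
      _ = chainProd y j * y (j + 1) * (y j * y (j + 1)) := by
          rw [hy.braid j (by omega)]; simp only [mul_assoc]
      _ = y (j + 1) * chainProd y (j + 2) := by
          rw [hcomm]; simp only [chainProd_succ, mul_assoc]
  | succ k hjk ih =>
    rw [chainProd_succ, mul_assoc, (hy.commute j k hjk (by omega)).symm.eq, ← mul_assoc,
      ih (by omega), mul_assoc]

theorem chainProd_mul_chainProd (hy : IsBraidChain y n) {j k : ℕ} (hjk : j < k)
    (hk : k ≤ n + 1) :
    chainProd y k * chainProd y j = chainProd (fun i => y (i + 1)) j * chainProd y k := by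
  induction j with
  | zero => simp [chainProd_zero]
  | succ j ih =>
    rw [chainProd_succ, ← mul_assoc, ih (by omega), mul_assoc,
      hy.chainProd_mul_eq_mul_chainProd (by omega) hk, chainProd_succ, mul_assoc]

theorem fork_commutator_eq (hy : IsBraidChain y n) (hz : IsBraidChain z n)
    (htail : ∀ i, y (i + 1) = z (i + 1)) (hyz : Commute (y 0) (z 0)) (hn : 1 ≤ n) :
    (z 0)⁻¹ * y 0 * (chainProd y (n + 1))⁻¹ * ((z 0)⁻¹ * y 0)⁻¹ * chainProd y (n + 1) =
      chainProd y (n + 1) * (chainProd y n)⁻¹ * ((z 0)⁻¹ * y 0) *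
        (chainProd y (n + 1) * (chainProd y n)⁻¹)⁻¹ := by
  obtain ⟨m, rfl⟩ : ∃ m, n = m + 1 := ⟨n - 1, by omega⟩
  have hshift_y := hy.chainProd_mul_chainProd (j := m + 1) (by omega) le_rfl
  have hshift_z := hz.chainProd_mul_chainProd (j := m + 1) (by omega) le_rfl
  rw [chainProd_succ' y (m + 1), chainProd_succ' y m] at hshift_y ⊢
  rw [chainProd_succ' z (m + 1), chainProd_succ' z m, ← funext htail] at hshift_z
  exact commutator_eq_conj_of_common_shift hyz hshift_y hshift_z

end IsBraidChain

end BraidChain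

section DeltaList

variable {G : Type*} [Group G]

theorem deltaList_append_singleton (ws : List G) (w : G) :
    deltaList (ws ++ [w]) = (ws ++ [w]).prod * deltaList ws := by
  unfold deltaList
  rw [List.length_append, List.length_singleton, List.range_succ, List.reverse_append]
  simp only [List.reverse_singleton, List.singleton_append, List.map_cons, List.prod_cons]
  congr 1
  · rw [List.take_of_length_le (by simp)]
  · refine congrArg List.prod (List.map_congr_left fun k hk => ?_)
    rw [List.take_append_of_le_length (by rw [List.mem_reverse, List.mem_range] at hk; omega)]

theorem deltaList_range_succ (y : ℕ → G) (k : ℕ) :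
    deltaList ((List.range (k + 1)).map y) =
      chainProd y (k + 1) * deltaList ((List.range k).map y) := by
  rw [List.range_succ, List.map_append, List.map_singleton, deltaList_append_singleton,
    ← List.map_singleton, ← List.map_append, ← List.range_succ]
  rfl

theorem commute_deltaList_left {zs : List G} {g : G} (h : ∀ w ∈ zs, Commute w g) :
    Commute (deltaList zs) g :=
  Commute.list_prod_left _ _ fun _ hw => by
    obtain ⟨k, -, rfl⟩ := List.mem_map.1 hw
    exact Commute.list_prod_left _ _ fun w hw => h w (List.mem_of_mem_take hw)

theorem IsBraidChain.deltaList_conj_eq {y : ℕ → G} {n k : ℕ} (hy : IsBraidChain y n)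
    (hk : k ≤ n) :
    deltaList ((List.range k).map y) * y k * (deltaList ((List.range k).map y))⁻¹ =
      chainProd y (k + 1) * (chainProd y k)⁻¹ := by
  cases k with
  | zero => simp [deltaList, chainProd]
  | succ j =>
    have hE : Commute (deltaList ((List.range j).map y)) (y (j + 1)) :=
      commute_deltaList_left fun w hw => by
        obtain ⟨i, hi, rfl⟩ := List.mem_map.1 hw
        exact hy.commute i (j + 1) (by rw [List.mem_range] at hi; omega) hk
    rw [deltaList_range_succ, chainProd_succ y (j + 1)]
    simp only [mul_inv_rev, mul_assoc, hE.eq, mul_inv_cancel_left]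

end DeltaList

variable {l : ℕ}

theorem mk_altWord_eq {i j : Fin l} (hij : i ≠ j) :
    PresentedGroup.mk (relsD l) (altWord i j (coxD l i j)) =
      PresentedGroup.mk (relsD l) (altWord j i (coxD l i j)) :=
  PresentedGroup.mk_eq_mk_of_mul_inv_mem ⟨i, j, hij, rfl⟩

theorem of_braid {i j : Fin l} (hij : i ≠ j) (h : coxD l i j = 3) :
    PresentedGroup.of (rels := relsD l) i * PresentedGroup.of j * PresentedGroup.of i =
      PresentedGroup.of j * PresentedGroup.of i * PresentedGroup.of j := by
  simpa [h, altWord, PresentedGroup.of, mul_assoc] using mk_altWord_eq hij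

theorem of_commute {i j : Fin l} (hij : i ≠ j) (h : coxD l i j = 2) :
    Commute (PresentedGroup.of (rels := relsD l) i) (PresentedGroup.of j) := by
  change _ * _ = _ * _
  simpa [h, altWord, PresentedGroup.of, mul_assoc] using mk_altWord_eq hij

theorem x_eq_of {i : ℕ} (hi : 1 ≤ i) (hil : i ≤ l) :
    x l i = PresentedGroup.of (⟨i - 1, by omega⟩ : Fin l) :=
  dif_pos ⟨hi, hil⟩

theorem x_braid {i j : ℕ} (hj : j ≤ l) (hij : i = 1 ∧ j = 3 ∨ 2 ≤ i ∧ j = i + 1) :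
    x l i * x l j * x l i = x l j * x l i * x l j := by
  rw [x_eq_of (by omega) (by omega), x_eq_of (by omega) hj]
  refine of_braid (by simp only [ne_eq, Fin.mk.injEq]; omega) ?_
  rw [coxD, if_neg (by simp only [Fin.mk.injEq]; omega), if_pos (by simp only; omega)]

theorem x_commute {i j : ℕ} (hj : j ≤ l)
    (hij : i = 1 ∧ (j = 2 ∨ 4 ≤ j) ∨ 2 ≤ i ∧ i + 2 ≤ j) : Commute (x l i) (x l j) := by
  rw [x_eq_of (by omega) (by omega), x_eq_of (by omega) hj]
  refine of_commute (by simp only [ne_eq, Fin.mk.injEq]; omega) ?_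
  rw [coxD, if_neg (by simp only [Fin.mk.injEq]; omega), if_neg (by simp only; omega)]

def branch (l e : ℕ) : ℕ → AD l
  | 0 => x l e
  | i + 1 => x l (i + 3)

theorem isBraidChain_branch {e : ℕ} (he : e = 1 ∨ e = 2) :
    IsBraidChain (branch l e) (l - 2) where
  braid i hi := by
    cases i with
    | zero => exact x_braid (i := e) (j := 3) (by omega) (by omega)
    | succ i => exact x_braid (i := i + 3) (j := i + 4) (by omega) (by omega)
  commute i j hij hj := by
    obtain ⟨j, rfl⟩ : ∃ j', j = j' + 1 := ⟨j - 1, by omega⟩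
    cases i with
    | zero => exact x_commute (i := e) (j := j + 3) (by omega) (by omega)
    | succ i => exact x_commute (i := i + 3) (j := j + 3) (by omega) (by omega)

theorem branch_two (k : ℕ) : branch l 2 k = x l (k + 2) := by
  cases k <;> rfl

theorem delta_two_eq (m : ℕ) :
    delta l 2 m = deltaList ((List.range (m - 1)).map (branch l 2)) := by
  rw [delta, show m + 1 - 2 = m - 1 by omega]
  congr 2
  funext k
  rw [branch_two, Nat.add_comm]

end ArtinTypeD

open ArtinTypeD in
/-- The first equality of **Lemma 3.5** of Labruère–Paris: in `A(D_l)` (`l ≥ 4`),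
`Δ(x_2,…,x_{l−1})⁻¹ x_1⁻¹ x_2 Δ(x_2,…,x_{l−1}) · Δ(x_2,…,x_l)⁻¹ x_2⁻¹ x_1 Δ(x_2,…,x_l)
  = x_l · Δ(x_2,…,x_{l−1})⁻¹ x_1⁻¹ x_2 Δ(x_2,…,x_{l−1}) · x_l⁻¹`. -/
theorem lemma_3_5_first (l : ℕ) (hl : 4 ≤ l) :
    (delta l 2 (l - 1))⁻¹ * (x l 1)⁻¹ * x l 2 * delta l 2 (l - 1) *
      ((delta l 2 l)⁻¹ * (x l 2)⁻¹ * x l 1 * delta l 2 l) =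
    x l l * ((delta l 2 (l - 1))⁻¹ * (x l 1)⁻¹ * x l 2 * delta l 2 (l - 1)) * (x l l)⁻¹ := by
  obtain ⟨n, rfl⟩ : ∃ n, l = n + 2 := ⟨l - 2, by omega⟩
  have hy : IsBraidChain (branch (n + 2) 2) n := isBraidChain_branch (by omega)
  have hz : IsBraidChain (branch (n + 2) 1) n := isBraidChain_branch (by omega)
  set b := chainProd (branch (n + 2) 2) (n + 1)
  set b' := chainProd (branch (n + 2) 2) n
  set D := delta (n + 2) 2 (n + 2 - 1) with hD
  have hdelta : delta (n + 2) 2 (n + 2) = b * D := by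
    rw [hD, delta_two_eq, delta_two_eq]
    exact deltaList_range_succ _ n
  have hconj : D * x (n + 2) (n + 2) * D⁻¹ = b * b'⁻¹ := by
    rw [hD, delta_two_eq, ← branch_two]
    exact hy.deltaList_conj_eq le_rfl
  have hfork : (x (n + 2) 1)⁻¹ * x (n + 2) 2 * b⁻¹ * ((x (n + 2) 1)⁻¹ * x (n + 2) 2)⁻¹ * b =
      b * b'⁻¹ * ((x (n + 2) 1)⁻¹ * x (n + 2) 2) * (b * b'⁻¹)⁻¹ :=
    hy.fork_commutator_eq hz (fun _ => rfl)
      (x_commute (i := 1) (j := 2) (by omega) (by omega)).symm (by omega)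
  rw [hdelta]
  calc _ = D⁻¹ * ((x (n + 2) 1)⁻¹ * x (n + 2) 2 * b⁻¹ *
        ((x (n + 2) 1)⁻¹ * x (n + 2) 2)⁻¹ * b) * D := by group
    _ = _ := by rw [hfork, ← hconj]; group
end

section
/- In the Artin group A(D_6), set w_1 = Δ(x_1,x_3)⁻¹ x_1⁻¹ x_2 Δ(x_1,x_3), w_2 = Δ(x_1,x_3,x_4)⁻¹ x_1⁻¹ x_2 Δ(x_1,x_3,x_4), and w_3 = Δ(x_1,x_3,x_4,x_5)⁻¹ x_1⁻¹ x_2 Δ(x_1,x_3,x_4,x_5). Then x_2⁻¹ x_1 w_1⁻¹ w_2⁻¹ w_3⁻¹ x_6 w_3 x_6⁻¹ w_1 = (x_2x_3x_4x_5x_6)⁻⁶ (x_1x_2x_3x_4x_5x_6)⁵. -/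
namespace ArtinTypeD

/-- `w_1 = Δ(x_1,x_3)⁻¹ x_1⁻¹ x_2 Δ(x_1,x_3)` in `A(D_6)`. -/
def w1 : AD 6 :=
  (deltaList [x 6 1, x 6 3])⁻¹ * (x 6 1)⁻¹ * x 6 2 * deltaList [x 6 1, x 6 3]

/-- `w_2 = Δ(x_1,x_3,x_4)⁻¹ x_1⁻¹ x_2 Δ(x_1,x_3,x_4)` in `A(D_6)`. -/
def w2 : AD 6 :=
  (deltaList [x 6 1, x 6 3, x 6 4])⁻¹ * (x 6 1)⁻¹ * x 6 2 * deltaList [x 6 1, x 6 3, x 6 4]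

/-- `w_3 = Δ(x_1,x_3,x_4,x_5)⁻¹ x_1⁻¹ x_2 Δ(x_1,x_3,x_4,x_5)` in `A(D_6)`. -/
def w3 : AD 6 :=
  (deltaList [x 6 1, x 6 3, x 6 4, x 6 5])⁻¹ * (x 6 1)⁻¹ * x 6 2 *
    deltaList [x 6 1, x 6 3, x 6 4, x 6 5]

end ArtinTypeD

namespace SubwordReversing

open FreeGroup hiding map_mul map_inv
open ArtinTypeD (altWord)

variable {ι : Type*}

def altLetters (a b : ι) : ℕ → List (ι × Bool)
  | 0 => []
  | k + 1 => (a, true) :: altLetters b a k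

theorem mk_altLetters (a b : ι) (k : ℕ) : mk (altLetters a b k) = altWord a b k := by
  induction k generalizing a b with
  | zero => rfl
  | succ k ih => rw [altLetters, altWord, ← ih]; rfl

theorem mk_cons (a : ι × Bool) (w : List (ι × Bool)) : mk (a :: w) = mk [a] * mk w := rfl

theorem mk_cons_true (i : ι) (w : List (ι × Bool)) : mk ((i, true) :: w) = of i * mk w := rfl

theorem mk_cons_false (i : ι) (w : List (ι × Bool)) : mk ((i, false) :: w) = (of i)⁻¹ * mk w :=
  rfl

theorem map_inv_of_mul_of {G : Type*} [Group G] {φ : FreeGroup ι →* G} {m : ℕ} {i j : ι}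
    (hm : m ≠ 0) (hφ : φ (altWord i j m) = φ (altWord j i m)) :
    φ ((of i)⁻¹ * of j) = φ (altWord j i (m - 1) * (altWord i j (m - 1))⁻¹) := by
  obtain ⟨k, rfl⟩ := Nat.exists_eq_add_one_of_ne_zero hm
  rw [altWord, altWord, map_mul, map_mul] at hφ
  rw [Nat.add_sub_cancel, map_mul, map_mul, map_inv, map_inv, inv_mul_eq_iff_eq_mul,
    ← mul_assoc, eq_mul_inv_iff_mul_eq, hφ]

variable [DecidableEq ι] (m : ι → ι → ℕ)

/-- One step of right reversing, applied to the leftmost factor `x_i⁻¹ x_j`. -/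
def reverseStep : List (ι × Bool) → Option (List (ι × Bool))
  | (i, false) :: (j, true) :: w =>
      if i = j then some w
      else some (altLetters j i (m i j - 1) ++ invRev (altLetters i j (m i j - 1)) ++ w)
  | a :: w => (reverseStep w).map (a :: ·)
  | [] => none

def reverse : ℕ → List (ι × Bool) → List (ι × Bool)
  | 0, w => w
  | n + 1, w =>
    match reverseStep m w with
    | some w' => reverse n w'
    | none => w

/-- Once reversing has brought `w` to the form `P N⁻¹`, the word `N⁻¹ P` is reversed in turn. -/
def reversesToNil (n : ℕ) (w : List (ι × Bool)) : Bool :=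
  let w' := reverse m n w
  (reverse m n (w'.dropWhile (·.2) ++ w'.takeWhile (·.2))).isEmpty

variable {m} {G : Type*} [Group G] {φ : FreeGroup ι →* G} (hm : ∀ i j, i ≠ j → m i j ≠ 0)
    (hφ : ∀ i j, i ≠ j → φ (altWord i j (m i j)) = φ (altWord j i (m i j)))
include hm hφ

theorem map_mk_of_reverseStep {w w' : List (ι × Bool)} (h : reverseStep m w = some w') :
    φ (mk w') = φ (mk w) := by
  fun_induction reverseStep m w generalizing w' with
  | case1 i w =>
    cases h
    rw [mk_cons_false, mk_cons_true, inv_mul_cancel_left]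
  | case2 i j w hij =>
    cases h
    rw [← mul_mk, ← mul_mk, ← inv_mk, mk_altLetters, mk_altLetters, mk_cons_false, mk_cons_true,
      ← mul_assoc, map_mul, map_mul _ (_ * _), map_inv_of_mul_of (hm i j hij) (hφ i j hij)]
  | case3 a w _ ih =>
    obtain ⟨v, hv, rfl⟩ := Option.map_eq_some_iff.mp h
    rw [mk_cons a v, mk_cons a w, map_mul, map_mul, ih hv]
  | case4 => cases h

theorem map_mk_reverse (n : ℕ) (w : List (ι × Bool)) :
    φ (mk (reverse m n w)) = φ (mk w) := by
  induction n generalizing w with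
  | zero => rfl
  | succ n ih =>
    rw [reverse]
    split
    next w' h => rw [ih, map_mk_of_reverseStep hm hφ h]
    next => rfl

theorem map_mk_eq_one_of_reversesToNil {n : ℕ} {w : List (ι × Bool)}
    (h : reversesToNil m n w = true) : φ (mk w) = 1 := by
  rw [reversesToNil, List.isEmpty_iff] at h
  have hrot : φ (mk ((reverse m n w).dropWhile (·.2))) *
      φ (mk ((reverse m n w).takeWhile (·.2))) = 1 := by
    rw [← map_mul, mul_mk, ← map_mk_reverse hm hφ n, h]
    exact map_one φ
  rw [← map_mk_reverse hm hφ n,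
    ← List.takeWhile_append_dropWhile (p := (·.2)) (l := reverse m n w), ← mul_mk, map_mul,
    mul_eq_one_comm.mp hrot]

end SubwordReversing

namespace ArtinTypeD

open SubwordReversing

theorem coxD_ne_zero (l : ℕ) (i j : Fin l) : coxD l i j ≠ 0 := by
  unfold coxD; split_ifs <;> omega

theorem mk_altWord_coxD {l : ℕ} {i j : Fin l} (h : i ≠ j) :
    PresentedGroup.mk (relsD l) (altWord i j (coxD l i j)) =
      PresentedGroup.mk (relsD l) (altWord j i (coxD l i j)) :=
  PresentedGroup.mk_eq_mk_of_mul_inv_mem ⟨i, j, h, rfl⟩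

theorem x_eq_mk_of {l i : ℕ} (h : 1 ≤ i ∧ i ≤ l) :
    x l i = PresentedGroup.mk (relsD l) (FreeGroup.of ⟨i - 1, by omega⟩) := by
  rw [x, dif_pos h]; rfl

theorem mk_eq_mk_of_reversesToNil {l n : ℕ} {a b : FreeGroup (Fin l)}
    (h : reversesToNil (coxD l) n (a * b⁻¹).toWord = true) :
    PresentedGroup.mk (relsD l) a = PresentedGroup.mk (relsD l) b := by
  apply eq_of_mul_inv_eq_one
  rw [← map_inv, ← map_mul, ← FreeGroup.mk_toWord (x := a * b⁻¹)]
  exact map_mk_eq_one_of_reversesToNil (fun i j _ ↦ coxD_ne_zero l i j)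
    (fun _ _ ↦ mk_altWord_coxD) h

end ArtinTypeD

open ArtinTypeD in
/-- **Lemma 3.6 (i)** of Labruère–Paris: in `A(D_6)`,
`x_2⁻¹ x_1 w_1⁻¹ w_2⁻¹ w_3⁻¹ x_6 w_3 x_6⁻¹ w_1 = Δ⁻²(x_2,…,x_6) Δ(x_1,…,x_6)`,
where `Δ²(x_2,…,x_6) = (x_2x_3x_4x_5x_6)⁶` and `Δ(x_1,…,x_6) = (x_1x_2x_3x_4x_5x_6)⁵`. -/
theorem lemma_3_6_i :
    (x 6 2)⁻¹ * x 6 1 * w1⁻¹ * w2⁻¹ * w3⁻¹ * x 6 6 * w3 * (x 6 6)⁻¹ * w1 =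
      ((x 6 2 * x 6 3 * x 6 4 * x 6 5 * x 6 6) ^ 6)⁻¹ *
        (x 6 1 * x 6 2 * x 6 3 * x 6 4 * x 6 5 * x 6 6) ^ 5 := by
  simp (disch := decide) only [w1, w2, w3, deltaList, x_eq_mk_of, List.length_cons,
    List.length_nil, List.range_succ, List.range_zero, List.nil_append, List.cons_append,
    List.reverse_cons, List.reverse_nil, List.map_cons, List.map_nil, List.take_succ_cons,
    List.take_zero, List.prod_cons, List.prod_nil, ← map_mul, ← map_inv, ← map_pow]
  -- the first reversing pass takes 1044 steps, the second one 30
  exact mk_eq_mk_of_reversesToNil (n := 1044) (by decide +kernel)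
end
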